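/- arXiv:2402.19031 — 3 statements merged into one kernel-verified Lean document; each statement's English description precedes it below -/
import Mathlib

section
/- Let N ≥ 1, p > 1, β > 0 and j > 0. Then there exist a convex function h : ℝ^N → [0, +∞) and a real number R > j such that: h(ξ) = 0 whenever |ξ| ≤ j; h(ξ) ≤ β(1 + |ξ|^p) for all ξ ∈ ℝ^N; and h(ξ) = β(1 + |ξ|^p) whenever |ξ| ≥ R. -/
open MeasureTheory Filter Metric

section Aux

open Set

private noncomputable def fA (β p : ℝ) : ℝ → ℝ := fun t => β * (1 + t ^ p)

private noncomputable def lA (β p R : ℝ) : ℝ → ℝ := fun t => fA β p R + β * p * R ^ (p - 1) * (t - R)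

private noncomputable def gA (β p R : ℝ) : ℝ → ℝ := fun t => if t ≤ R then lA β p R t else fA β p t

private lemma fA_convex {β p : ℝ} (hp : 1 ≤ p) (hβ : 0 ≤ β) :
    ConvexOn ℝ (Ici 0) (fA β p) := by
  refine ⟨convex_Ici 0, ?_⟩
  intro x hx y hy a b ha hb hab
  have h := (convexOn_rpow hp).2 hx hy ha hb hab
  simp only [smul_eq_mul] at h ⊢
  simp only [fA]
  nlinarith [mul_le_mul_of_nonneg_left h hβ]

private lemma fA_mono {β p : ℝ} (hp : 0 ≤ p) (hβ : 0 ≤ β) :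
    MonotoneOn (fA β p) (Ici 0) := by
  intro x hx y _ hxy
  simp only [fA]
  have := Real.rpow_le_rpow hx hxy hp
  nlinarith

private lemma tangent {β p R : ℝ} (hp : 1 < p) (hβ : 0 ≤ β) (hR : 0 < R)
    {t : ℝ} (ht : 0 ≤ t) : lA β p R t ≤ fA β p t := by
  simp only [lA, fA]
  have key : R ^ p + p * R ^ (p - 1) * (t - R) ≤ t ^ p := by
    have hs : -1 ≤ t / R - 1 := by
      have : 0 ≤ t / R := div_nonneg ht hR.le
      linarith
    have hb := one_add_mul_self_le_rpow_one_add hs hp.le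
    have h1 : (1 + (t / R - 1)) = t / R := by ring
    rw [h1, Real.div_rpow ht hR.le] at hb
    have hRp : 0 < R ^ p := Real.rpow_pos_of_pos hR p
    have h2 : R ^ p * (1 + p * (t / R - 1)) ≤ t ^ p := by
      rw [mul_comm, ← le_div_iff₀ hRp]; exact hb
    have h3 : R ^ (p - 1) * R = R ^ p := by
      nth_rewrite 2 [← Real.rpow_one R]
      rw [← Real.rpow_add hR]; norm_num
    have h4 : R ^ p * (t / R) = R ^ (p - 1) * t := by
      rw [← h3]; field_simp
    nlinarith [h2, h4]
  nlinarith [key]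

private lemma lA_lin {β p R a b x y : ℝ} (hab : a + b = 1) :
    lA β p R (a * x + b * y) = a * lA β p R x + b * lA β p R y := by
  simp only [lA]
  linear_combination (- fA β p R + β * p * R ^ (p - 1) * R) * hab

private lemma gA_mono {β p R : ℝ} (hp : 1 ≤ p) (hβ : 0 ≤ β) (hR : 0 < R) :
    MonotoneOn (gA β p R) (Ici 0) := by
  have hc : 0 ≤ β * p * R ^ (p - 1) := by positivity
  intro x hx y hy hxy
  simp only [gA]
  by_cases hxR : x ≤ R <;> by_cases hyR : y ≤ R
  · rw [if_pos hxR, if_pos hyR]; simp only [lA]; nlinarith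
  · rw [if_pos hxR, if_neg hyR]
    calc lA β p R x ≤ lA β p R R := by simp only [lA]; nlinarith
    _ = fA β p R := by simp only [lA]; ring
    _ ≤ fA β p y := fA_mono (by linarith) hβ hR.le (by linarith : (0:ℝ) ≤ y) (by linarith)
  · exact absurd (hxy.trans hyR) hxR
  · rw [if_neg hxR, if_neg hyR]
    exact fA_mono (by linarith) hβ hx hy hxy

private lemma gA_convex_aux {β p R : ℝ} (hp : 1 < p) (hβ : 0 ≤ β) (hR : 0 < R)
    {x y a b : ℝ} (hx : 0 ≤ x) (hy : 0 ≤ y) (ha : 0 ≤ a) (hb : 0 ≤ b)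
    (hab : a + b = 1) (hxR : x ≤ R) :
    gA β p R (a * x + b * y) ≤ a * gA β p R x + b * gA β p R y := by
  set z := a * x + b * y with hz
  by_cases hyR : y ≤ R
  · -- both ≤ R, so z ≤ R; equality by linearity
    have hzR : z ≤ R := by nlinarith
    simp only [gA, if_pos hxR, if_pos hyR, if_pos hzR]
    exact le_of_eq (lA_lin hab)
  · push_neg at hyR
    by_cases hzR : z ≤ R
    · -- z ≤ R : use linearity and lA y ≤ fA y
      simp only [gA, if_pos hxR, if_pos hzR, if_neg (not_le.mpr hyR)]
      rw [lA_lin hab]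
      have := tangent hp hβ hR hy (β := β)
      nlinarith [tangent hp hβ hR hy (β := β)]
    · push_neg at hzR
      simp only [gA, if_pos hxR, if_neg (not_le.mpr hyR), if_neg (not_le.mpr hzR)]
      have hyRpos : 0 < y - R := by linarith
      set μ : ℝ := (z - R) / (y - R) with hμ
      have hμ0 : 0 ≤ μ := div_nonneg (by linarith) hyRpos.le
      have hμ1 : μ ≤ 1 := by
        rw [div_le_one hyRpos]
        have hxy : x ≤ y := by linarith
        nlinarith
      have hμb : μ ≤ b := by
        rw [div_le_iff₀ hyRpos]
        nlinarith
      have hcomb : (1 - μ) * R + μ * y = z := by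
        have hmul : μ * (y - R) = z - R := div_mul_cancel₀ _ (ne_of_gt hyRpos)
        linear_combination hmul
      have hfz : fA β p z ≤ (1 - μ) * fA β p R + μ * fA β p y := by
        have h := (fA_convex hp.le hβ).2 (le_refl (0:ℝ) |>.trans hR.le : R ∈ Ici 0)
          (hy : y ∈ Ici 0) (by linarith : (0:ℝ) ≤ 1 - μ) hμ0 (by ring)
        simp only [smul_eq_mul] at h
        rw [hcomb] at h
        exact h
      have hlz : lA β p R z = a * lA β p R x + b * lA β p R y := lA_lin hab
      have hlz2 : (1 - μ) * lA β p R R + μ * lA β p R y = lA β p R z := by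
        have := lA_lin (β := β) (p := p) (R := R) (a := 1 - μ) (b := μ)
          (x := R) (y := y) (by ring)
        rw [hcomb] at this
        linarith [this]
      have hlRfR : lA β p R R = fA β p R := by simp only [lA]; ring
      have hly : lA β p R y ≤ fA β p y := tangent hp hβ hR hy
      nlinarith [mul_le_mul_of_nonneg_right hμb (sub_nonneg.2 hly)]

private lemma gA_convex {β p R : ℝ} (hp : 1 < p) (hβ : 0 ≤ β) (hR : 0 < R) :
    ConvexOn ℝ (Ici 0) (gA β p R) := by
  refine ⟨convex_Ici 0, ?_⟩
  intro x hx y hy a b ha hb hab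
  simp only [smul_eq_mul]
  by_cases hxR : x ≤ R
  · exact gA_convex_aux hp hβ hR hx hy ha hb hab hxR
  · by_cases hyR : y ≤ R
    · have := gA_convex_aux hp hβ hR hy hx hb ha (by linarith) hyR
      calc gA β p R (a * x + b * y) = gA β p R (b * y + a * x) := by ring_nf
      _ ≤ b * gA β p R y + a * gA β p R x := this
      _ = a * gA β p R x + b * gA β p R y := by ring
    · push_neg at hxR hyR
      have hzR : ¬ (a * x + b * y ≤ R) := by
        push_neg
        rcases lt_or_ge 0 a with ha' | ha'
        · nlinarith
        · have : a = 0 := le_antisymm ha' ha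
          subst this
          simp only [zero_mul, zero_add] at *
          nlinarith
      simp only [gA, if_neg (not_le.mpr hxR), if_neg (not_le.mpr hyR), if_neg hzR]
      have h := (fA_convex hp.le hβ).2 (hx : x ∈ Ici 0) (hy : y ∈ Ici 0) ha hb hab
      simpa using h

end Aux

/-- Existence of a convex function `h` vanishing on the ball of radius `j`, dominated by
`β(1+|ξ|^p)` everywhere, and equal to `β(1+|ξ|^p)` outside a larger ball of radius `R > j`. -/
theorem exists_convex_truncation
    (N : ℕ) (hN : 1 ≤ N) (p β j : ℝ) (hp : 1 < p) (hβ : 0 < β) (hj : 0 < j) :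
    ∃ (h : EuclideanSpace ℝ (Fin N) → ℝ) (R : ℝ),
      ConvexOn ℝ Set.univ h ∧ (∀ ξ, 0 ≤ h ξ) ∧ j < R ∧
      (∀ ξ : EuclideanSpace ℝ (Fin N), ‖ξ‖ ≤ j → h ξ = 0) ∧
      (∀ ξ : EuclideanSpace ℝ (Fin N), h ξ ≤ β * (1 + ‖ξ‖ ^ p)) ∧
      (∀ ξ : EuclideanSpace ℝ (Fin N), R ≤ ‖ξ‖ → h ξ = β * (1 + ‖ξ‖ ^ p)) := by
  have hp1 : (0:ℝ) < p - 1 := by linarith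
  set R : ℝ := max (j + 1) (max 1 (max (2 / (p - 1)) (2 * p * j / (p - 1)))) with hRdef
  have hRj : j < R := lt_of_lt_of_le (by linarith) (le_max_left _ _)
  have hR1 : (1:ℝ) ≤ R := le_trans (le_max_left _ _) (le_max_right _ _)
  have hR0 : (0:ℝ) < R := by linarith
  have hRA : 2 / (p - 1) ≤ R :=
    le_trans (le_trans (le_max_left _ _) (le_max_right _ _)) (le_max_right _ _)
  have hRB : 2 * p * j / (p - 1) ≤ R :=
    le_trans (le_trans (le_max_right _ _) (le_max_right _ _)) (le_max_right _ _)
  -- key inequality : lA β p R j ≤ 0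
  have hRpow : R ^ (p - 1) * R = R ^ p := by
    nth_rewrite 2 [← Real.rpow_one R]
    rw [← Real.rpow_add hR0]; norm_num
  have hRle : R ≤ R ^ p := by
    nth_rewrite 1 [← Real.rpow_one R]
    exact Real.rpow_le_rpow_of_exponent_le hR1 (by linarith)
  have hRpm1 : (0:ℝ) ≤ R ^ (p - 1) := Real.rpow_nonneg hR0.le _
  have hC : p * j ≤ (p - 1) * R / 2 := by
    rw [div_le_iff₀ hp1] at hRB
    nlinarith
  have hD : (1:ℝ) ≤ (p - 1) * R / 2 := by
    rw [div_le_iff₀ hp1] at hRA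
    nlinarith
  have hlj : lA β p R j ≤ 0 := by
    simp only [lA, fA]
    have h1 : p * j * R ^ (p - 1) ≤ (p - 1) * R ^ p / 2 := by
      have := mul_le_mul_of_nonneg_right hC hRpm1
      nlinarith
    have h2 : (1:ℝ) ≤ (p - 1) * R ^ p / 2 := by nlinarith
    have h3 : p * R ^ (p - 1) * R = p * R ^ p := by rw [mul_assoc, hRpow]
    nlinarith
  -- the function
  refine ⟨fun ξ => max 0 (gA β p R ‖ξ‖), R, ?_, fun ξ => le_max_left _ _, hRj, ?_, ?_, ?_⟩
  · -- convexity
    refine ⟨convex_univ, ?_⟩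
    intro ξ _ η _ a b ha hb hab
    simp only [smul_eq_mul]
    have hmono : MonotoneOn (fun t => max 0 (gA β p R t)) (Set.Ici 0) := fun s hs t ht hst =>
      max_le_max le_rfl (gA_mono hp.le hβ.le hR0 hs ht hst)
    have hnorm : ‖a • ξ + b • η‖ ≤ a * ‖ξ‖ + b * ‖η‖ := by
      calc ‖a • ξ + b • η‖ ≤ ‖a • ξ‖ + ‖b • η‖ := norm_add_le _ _
      _ = a * ‖ξ‖ + b * ‖η‖ := by rw [norm_smul, norm_smul, Real.norm_of_nonneg ha,
            Real.norm_of_nonneg hb]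
    have step1 : max 0 (gA β p R ‖a • ξ + b • η‖) ≤ max 0 (gA β p R (a * ‖ξ‖ + b * ‖η‖)) :=
      hmono (norm_nonneg _) (Set.mem_Ici.mpr (by positivity)) hnorm
    have step2 : gA β p R (a * ‖ξ‖ + b * ‖η‖) ≤ a * gA β p R ‖ξ‖ + b * gA β p R ‖η‖ := by
      have h := (gA_convex hp hβ.le hR0).2 (norm_nonneg ξ) (norm_nonneg η) ha hb hab
      simpa using h
    have step3 : max 0 (gA β p R (a * ‖ξ‖ + b * ‖η‖)) ≤
        a * max 0 (gA β p R ‖ξ‖) + b * max 0 (gA β p R ‖η‖) := by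
      apply max_le (by positivity)
      calc gA β p R (a * ‖ξ‖ + b * ‖η‖) ≤ a * gA β p R ‖ξ‖ + b * gA β p R ‖η‖ := step2
      _ ≤ a * max 0 (gA β p R ‖ξ‖) + b * max 0 (gA β p R ‖η‖) := by
          gcongr <;> exact le_max_right _ _
    exact step1.trans step3
  · -- vanishes on ball of radius j
    intro ξ hξ
    have hR' : ‖ξ‖ ≤ R := le_trans hξ hRj.le
    have : gA β p R ‖ξ‖ ≤ 0 := by
      simp only [gA, if_pos hR']
      calc lA β p R ‖ξ‖ ≤ lA β p R j := by
            simp only [lA]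
            have : (0:ℝ) ≤ β * p * R ^ (p - 1) := by positivity
            nlinarith
      _ ≤ 0 := hlj
    simpa using max_eq_left this
  · -- dominated by β(1 + ‖ξ‖^p)
    intro ξ
    have hf0 : (0:ℝ) ≤ β * (1 + ‖ξ‖ ^ p) := by positivity
    apply max_le hf0
    by_cases hR' : ‖ξ‖ ≤ R
    · simp only [gA, if_pos hR']
      exact tangent hp hβ.le hR0 (norm_nonneg ξ)
    · simp only [gA, if_neg hR', fA, le_refl]
  · -- equality outside radius R
    intro ξ hξ
    rcases eq_or_lt_of_le hξ with h | h
    · have hn : ‖ξ‖ = R := h.symm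
      simp only [gA, hn, if_pos le_rfl]
      have : lA β p R R = fA β p R := by simp only [lA]; ring
      rw [this]
      simp only [fA]
      rw [max_eq_right (by positivity)]
    · simp only [gA, if_neg (not_le.mpr h)]
      have : fA β p ‖ξ‖ = β * (1 + ‖ξ‖ ^ p) := rfl
      rw [this, max_eq_right (by positivity)]
end

section
/- Let D ⊂ ℝ be a bounded open interval and 0 < α ≤ β. Let (a_k) and (b_k) be sequences of measurable functions on D with values in [α, β], and assume that for almost every x ∈ D, lim_{ρ→0⁺} limsup_{k→+∞} (1/ρ) ∫_{B_ρ(x) ∩ D} |a_k(y) − b_k(y)| dy = 0. Assume moreover that there exists θ ∈ L^∞(D) such that 1/a_k − 1/b_k converges to θ weakly* in L^∞(D), i.e. ∫_D (1/a_k(y) − 1/b_k(y)) φ(y) dy → ∫_D θ(y) φ(y) dy for every φ ∈ L¹(D). Then θ(x) = 0 for almost every x ∈ D. -/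
open MeasureTheory Filter Metric Set Topology
open scoped ENNReal

/-!
Testing the weak* convergence against the indicator of `B_r(x)` gives
`∫_{B_r(x) ∩ D} θ = lim_k ∫_{B_r(x) ∩ D} (1/a_k - 1/b_k)`, and
`|1/a - 1/b| = |a - b| / (a b) ≤ |a - b| / α²`. Hence `(1/r) |∫_{B_r(x) ∩ D} θ|` is at most
`α⁻²` times the quantity that tends to `0` by the closeness condition. On the other hand, since
`|B_r(x)| = 2r`, by Lebesgue's differentiation theorem it tends to `2 |θ(x)|` at almost every
`x ∈ D`.
-/

theorem MeasureTheory.LocallyIntegrable.ae_tendsto_inv_two_mul_smul_setIntegral_ball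
    {E : Type*} [NormedAddCommGroup E] [NormedSpace ℝ E] [CompleteSpace E]
    {f : ℝ → E} (hf : LocallyIntegrable f) :
    ∀ᵐ x, Tendsto (fun r => (2 * r)⁻¹ • ∫ y in ball x r, f y) (𝓝[>] 0) (𝓝 (f x)) := by
  filter_upwards [IsUnifLocDoublingMeasure.ae_tendsto_average volume hf 1] with x hx
  refine (hx (fun _ => x) (fun r => r) tendsto_id ?_).congr' ?_
  all_goals filter_upwards [self_mem_nhdsWithin] with r (hr : 0 < r)
  · simpa using hr.le
  · rw [setAverage_eq, Real.volume_real_closedBall hr.le, Real.closedBall_eq_Icc,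
      integral_Icc_eq_integral_Ioo, ← Real.ball_eq_Ioo]

theorem le_limsup_of_tendsto_of_le {ι : Type*} {l : Filter ι} [l.NeBot] {u w : ι → ℝ} {L : ℝ}
    (hu : Tendsto u l (𝓝 L)) (huw : u ≤ᶠ[l] w) (hw : IsBoundedUnder (· ≤ ·) l w) :
    L ≤ limsup w l :=
  hu.limsup_eq ▸ limsup_le_limsup huw hu.isCoboundedUnder_le hw

theorem sq_mul_abs_one_div_sub_one_div_le {α a b : ℝ} (hα : 0 < α) (ha : α ≤ a) (hb : α ≤ b) :
    α ^ 2 * |1 / a - 1 / b| ≤ |a - b| := by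
  have ha₀ : 0 < a := hα.trans_le ha
  have hb₀ : 0 < b := hα.trans_le hb
  calc α ^ 2 * |1 / a - 1 / b| = α ^ 2 * (|a - b| / (a * b)) := by
        rw [div_sub_div _ _ ha₀.ne' hb₀.ne', abs_div, abs_of_pos (mul_pos ha₀ hb₀), abs_sub_comm,
          one_mul, mul_one]
    _ ≤ (a * b) * (|a - b| / (a * b)) := by gcongr; nlinarith
    _ = |a - b| := mul_div_cancel₀ _ (mul_pos ha₀ hb₀).ne'

section

variable {X : Type*} [MeasurableSpace X] {μ : Measure X}

theorem sq_mul_abs_setIntegral_one_div_sub_one_div_le {s : Set X} {f g : X → ℝ} {α : ℝ}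
    (hs : MeasurableSet s) (hα : 0 < α) (hf : ∀ x ∈ s, α ≤ f x) (hg : ∀ x ∈ s, α ≤ g x)
    (hfg : IntegrableOn (fun x => f x - g x) s μ) :
    α ^ 2 * |∫ x in s, (1 / f x - 1 / g x) ∂μ| ≤ ∫ x in s, |f x - g x| ∂μ :=
  calc α ^ 2 * |∫ x in s, (1 / f x - 1 / g x) ∂μ|
      ≤ α ^ 2 * ∫ x in s, |1 / f x - 1 / g x| ∂μ := by
        gcongr; exact abs_integral_le_integral_abs
    _ = ∫ x in s, α ^ 2 * |1 / f x - 1 / g x| ∂μ := (integral_const_mul _ _).symm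
    _ ≤ ∫ x in s, |f x - g x| ∂μ := by
        refine integral_mono_of_nonneg (Eventually.of_forall fun x => by positivity) hfg.abs ?_
        filter_upwards [ae_restrict_mem hs] with x hx
        exact sq_mul_abs_one_div_sub_one_div_le hα (hf x hx) (hg x hx)

theorem tendsto_setIntegral_inter_of_tendsto_integral_mul {ι : Type*} {l : Filter ι}
    {f : ι → X → ℝ} {θ : X → ℝ} {s D : Set X} (hs : MeasurableSet s) (hD : μ D ≠ ∞)
    (hweak : ∀ φ : X → ℝ, IntegrableOn φ D μ →
      Tendsto (fun i => ∫ y in D, f i y * φ y ∂μ) l (𝓝 (∫ y in D, θ y * φ y ∂μ))) :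
    Tendsto (fun i => ∫ y in s ∩ D, f i y ∂μ) l (𝓝 (∫ y in s ∩ D, θ y ∂μ)) := by
  have hmul : ∀ g : X → ℝ,
      ∫ y in D, g y * s.indicator (fun _ => 1) y ∂μ = ∫ y in s ∩ D, g y ∂μ := by
    intro g
    simp_rw [← indicator_mul_right, mul_one]
    rw [setIntegral_indicator hs, inter_comm]
  simpa only [hmul] using hweak _ ((integrableOn_const (C := (1 : ℝ)) hD).indicator hs)

theorem sq_mul_abs_setIntegral_le_limsup_of_tendsto_integral_mul {s D : Set X} {α β c : ℝ}
    {a b : ℕ → X → ℝ} {θ : X → ℝ} (hs : MeasurableSet s) (hD : MeasurableSet D)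
    (hμD : μ D ≠ ∞) (hc : 0 ≤ c) (hα : 0 < α)
    (hameas : ∀ k, Measurable (a k)) (hbmeas : ∀ k, Measurable (b k))
    (hrange : ∀ k x, x ∈ D → a k x ∈ Icc α β ∧ b k x ∈ Icc α β)
    (hweak : ∀ φ : X → ℝ, IntegrableOn φ D μ →
      Tendsto (fun k => ∫ y in D, (1 / a k y - 1 / b k y) * φ y ∂μ) atTop
        (𝓝 (∫ y in D, θ y * φ y ∂μ))) :
    α ^ 2 * |c * ∫ y in s ∩ D, θ y ∂μ| ≤
      limsup (fun k => c * ∫ y in s ∩ D, |a k y - b k y| ∂μ) atTop := by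
  have hsD : μ (s ∩ D) < ∞ := (measure_mono inter_subset_right).trans_lt hμD.lt_top
  have hdiff : ∀ k, ∀ y ∈ s ∩ D, |a k y - b k y| ≤ β - α := fun k y hy => by
    obtain ⟨⟨ha, ha'⟩, hb, hb'⟩ := hrange k y hy.2
    exact abs_sub_le_iff.2 ⟨by linarith, by linarith⟩
  have hint : ∀ k, IntegrableOn (fun y => a k y - b k y) (s ∩ D) μ := fun k =>
    Measure.integrableOn_of_bounded hsD.ne ((hameas k).sub (hbmeas k)).aestronglyMeasurable
      ((ae_restrict_iff' (hs.inter hD)).2 (Eventually.of_forall (hdiff k)))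
  refine le_limsup_of_tendsto_of_le
    (((tendsto_setIntegral_inter_of_tendsto_integral_mul hs hμD hweak).const_mul c).abs.const_mul
      (α ^ 2)) (Eventually.of_forall fun k => ?_) (isBoundedUnder_of ⟨c * ((β - α) * μ.real (s ∩ D)), fun k => ?_⟩)
  · dsimp only
    rw [abs_mul, abs_of_nonneg hc, mul_left_comm]
    gcongr
    exact sq_mul_abs_setIntegral_one_div_sub_one_div_le (hs.inter hD) hα
      (fun y hy => (hrange k y hy.2).1.1) (fun y hy => (hrange k y hy.2).2.1) (hint k)
  · gcongr
    exact (le_abs_self _).trans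
      (norm_setIntegral_le_of_norm_le_const (f := fun y => |a k y - b k y|) hsD
        fun y hy => (abs_abs _).trans_le (hdiff k y hy))

end

theorem one_dim_weak_star_limit_vanishes_general
    (c₀ d₀ : ℝ) (α β : ℝ) (hα : 0 < α)
    (a b : ℕ → ℝ → ℝ)
    (hameas : ∀ k, Measurable (a k)) (hbmeas : ∀ k, Measurable (b k))
    (hrange : ∀ k x, x ∈ Set.Ioo c₀ d₀ → a k x ∈ Set.Icc α β ∧ b k x ∈ Set.Icc α β)
    (hclose : ∀ᵐ x ∂(volume.restrict (Set.Ioo c₀ d₀)),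
      Tendsto (fun ρ : ℝ => Filter.limsup (fun k : ℕ =>
          (1 / ρ) * ∫ y in ball x ρ ∩ Set.Ioo c₀ d₀, |a k y - b k y|) atTop)
        (nhdsWithin 0 (Set.Ioi 0)) (nhds 0))
    (θ : ℝ → ℝ) (hθmeas : Measurable θ)
    (hθbd : ∃ C : ℝ, ∀ᵐ x ∂(volume.restrict (Set.Ioo c₀ d₀)), |θ x| ≤ C)
    (hweak : ∀ φ : ℝ → ℝ, IntegrableOn φ (Set.Ioo c₀ d₀) →
      Tendsto (fun k : ℕ => ∫ y in Set.Ioo c₀ d₀, (1 / a k y - 1 / b k y) * φ y) atTop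
        (nhds (∫ y in Set.Ioo c₀ d₀, θ y * φ y))) :
    ∀ᵐ x ∂(volume.restrict (Set.Ioo c₀ d₀)), θ x = 0 := by
  obtain ⟨C, hC⟩ := hθbd
  have hθ : IntegrableOn θ (Ioo c₀ d₀) :=
    Measure.integrableOn_of_bounded measure_Ioo_lt_top.ne hθmeas.aestronglyMeasurable hC
  filter_upwards [hclose, ae_restrict_mem measurableSet_Ioo,
    ae_restrict_of_ae ((hθ.integrable_indicator measurableSet_Ioo).locallyIntegrable
      |>.ae_tendsto_inv_two_mul_smul_setIntegral_ball)] with x hx hxD hθx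
  have hzero : Tendsto (fun r => (1 / r) * ∫ y in ball x r ∩ Ioo c₀ d₀, θ y) (𝓝[>] 0) (𝓝 0) := by
    refine squeeze_zero_norm' ?_ (by simpa only [zero_div] using hx.div_const (α ^ 2))
    filter_upwards [self_mem_nhdsWithin] with r (hr : 0 < r)
    rw [Real.norm_eq_abs, le_div_iff₀' (by positivity)]
    exact sq_mul_abs_setIntegral_le_limsup_of_tendsto_integral_mul measurableSet_ball
      measurableSet_Ioo measure_Ioo_lt_top.ne (by positivity) hα hameas hbmeas hrange hweak
  have htwo : Tendsto (fun r => (1 / r) * ∫ y in ball x r ∩ Ioo c₀ d₀, θ y) (𝓝[>] 0)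
      (𝓝 (2 * θ x)) := by
    rw [indicator_of_mem hxD] at hθx
    refine (hθx.const_mul 2).congr' ?_
    filter_upwards [self_mem_nhdsWithin] with r (hr : 0 < r)
    rw [setIntegral_indicator measurableSet_Ioo, smul_eq_mul]
    field_simp
  linarith [tendsto_nhds_unique htwo hzero]

/-- In dimension one, the local closeness condition on the coefficients `a_k`, `b_k`
forces any weak* limit `θ` of `1/a_k − 1/b_k` in `L^∞(D)` to vanish almost everywhere. -/
theorem one_dim_weak_star_limit_vanishes
    (c₀ d₀ : ℝ) (hcd : c₀ < d₀) (α β : ℝ) (hα : 0 < α) (hαβ : α ≤ β)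
    (a b : ℕ → ℝ → ℝ)
    (hameas : ∀ k, Measurable (a k)) (hbmeas : ∀ k, Measurable (b k))
    (hrange : ∀ k x, x ∈ Set.Ioo c₀ d₀ → a k x ∈ Set.Icc α β ∧ b k x ∈ Set.Icc α β)
    (hclose : ∀ᵐ x ∂(volume.restrict (Set.Ioo c₀ d₀)),
      Tendsto (fun ρ : ℝ => Filter.limsup (fun k : ℕ =>
          (1 / ρ) * ∫ y in ball x ρ ∩ Set.Ioo c₀ d₀, |a k y - b k y|) atTop)
        (nhdsWithin 0 (Set.Ioi 0)) (nhds 0))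
    (θ : ℝ → ℝ) (hθmeas : Measurable θ)
    (hθbd : ∃ C : ℝ, ∀ᵐ x ∂(volume.restrict (Set.Ioo c₀ d₀)), |θ x| ≤ C)
    (hweak : ∀ φ : ℝ → ℝ, IntegrableOn φ (Set.Ioo c₀ d₀) →
      Tendsto (fun k : ℕ => ∫ y in Set.Ioo c₀ d₀, (1 / a k y - 1 / b k y) * φ y) atTop
        (nhds (∫ y in Set.Ioo c₀ d₀, θ y * φ y))) :
    ∀ᵐ x ∂(volume.restrict (Set.Ioo c₀ d₀)), θ x = 0 :=
  one_dim_weak_star_limit_vanishes_general c₀ d₀ α β hα a b hameas hbmeas hrange hclose θ hθmeas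
    hθbd hweak
end

section
/- Let 0 < α ≤ β and let a, b : ℝ → [α, β] be measurable 1-periodic functions such that ∫_0^1 1/a(y) dy = ∫_0^1 1/b(y) dy and ∫_0^1 |a(y) − b(y)| dy > 0. For k ∈ ℕ set a_k(x) = a(kx) and b_k(x) = b(kx). Then: (i) for every real c < d, lim_{k→+∞} ∫_c^d ( 1/a_k(x) − 1/b_k(x) ) dx = 0 (so 1/a_k − 1/b_k converges weakly* to 0); and (ii) for every x ∈ ℝ and every ρ > 0, lim_{k→+∞} (1/(2ρ)) ∫_{x−ρ}^{x+ρ} |a_k(y) − b_k(y)| dy = ∫_0^1 |a(y) − b(y)| dy > 0, so that lim_{ρ→0⁺} lim_{k→+∞} (1/(2ρ)) ∫_{x−ρ}^{x+ρ} |a_k(y) − b_k(y)| dy ≠ 0. -/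
open MeasureTheory Filter intervalIntegral


lemma periodic_avg_tendsto (f : ℝ → ℝ) (hf : Measurable f) (M : ℝ)
    (hM : ∀ y, |f y| ≤ M) (hper : Function.Periodic f 1) (c d : ℝ) (hcd : c ≤ d) :
    Tendsto (fun k : ℕ => ∫ x in c..d, f (k * x)) atTop
      (nhds ((d - c) * ∫ y in (0:ℝ)..1, f y)) := by
  have hM0 : 0 ≤ M := le_trans (abs_nonneg _) (hM 0)
  have hint : ∀ u v : ℝ, IntervalIntegrable f volume u v := by
    intro u v
    refine (_root_.intervalIntegrable_const (μ := volume) (a := u) (b := v) (c := M)).mono_fun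
      hf.aestronglyMeasurable.restrict ?_
    filter_upwards with y
    simpa [Real.norm_eq_abs, abs_of_nonneg hM0] using hM y
  set I := ∫ y in (0:ℝ)..1, f y with hI
  rw [tendsto_iff_norm_sub_tendsto_zero]
  have hbound : ∀ k : ℕ, 1 ≤ k →
      ‖(∫ x in c..d, f (k * x)) - (d - c) * I‖ ≤ (|I| + M) / k := by
    intro k hk
    have hK : (0:ℝ) < (k:ℝ) := by exact_mod_cast hk
    have hKne : (k:ℝ) ≠ 0 := ne_of_gt hK
    set n : ℤ := ⌊(k:ℝ) * d - (k:ℝ) * c⌋ with hn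
    have hfl := Int.floor_le ((k:ℝ) * d - (k:ℝ) * c)
    have hfl' := Int.lt_floor_add_one ((k:ℝ) * d - (k:ℝ) * c)
    have h1 : (∫ x in c..d, f ((k:ℝ) * x)) = (k:ℝ)⁻¹ • ∫ x in (k:ℝ)*c..(k:ℝ)*d, f x :=
      integral_comp_mul_left f hKne
    have hsplit : (∫ x in (k:ℝ)*c..(k:ℝ)*d, f x)
        = (∫ x in (k:ℝ)*c..((k:ℝ)*c + n), f x) + ∫ x in ((k:ℝ)*c + n)..(k:ℝ)*d, f x :=
      (integral_add_adjacent_intervals (hint _ _) (hint _ _)).symm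
    have hmain : (∫ x in (k:ℝ)*c..((k:ℝ)*c + n), f x) = (n:ℝ) * I := by
      have h0 := hper.intervalIntegral_add_zsmul_eq n ((k:ℝ)*c) hint
      have h2 : (∫ x in (k:ℝ)*c..((k:ℝ)*c + 1), f x) = I := by
        rw [hper.intervalIntegral_add_eq ((k:ℝ)*c) 0]; norm_num [hI]
      simpa [h2, zsmul_eq_mul, smul_eq_mul] using h0
    set T := ∫ x in ((k:ℝ)*c + n)..(k:ℝ)*d, f x with hT
    have hTle : |T| ≤ M := by
      have h3 : ‖T‖ ≤ M * |(k:ℝ)*d - ((k:ℝ)*c + n)| :=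
        norm_integral_le_of_norm_le_const (fun x _ => hM x)
      have habs : |(k:ℝ)*d - ((k:ℝ)*c + n)| ≤ 1 :=
        abs_le.mpr ⟨by linarith, by linarith⟩
      rw [Real.norm_eq_abs] at h3
      nlinarith
    have hF : (∫ x in c..d, f ((k:ℝ)*x)) = (k:ℝ)⁻¹ * ((n:ℝ) * I + T) := by
      rw [h1, hsplit, hmain, smul_eq_mul]
    have heq : (k:ℝ)⁻¹ * ((n:ℝ)*I + T) - (d-c)*I
        = (k:ℝ)⁻¹ * (((n:ℝ) - ((k:ℝ)*d - (k:ℝ)*c))*I + T) := by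
      field_simp; ring
    have hnd : |(n:ℝ) - ((k:ℝ)*d - (k:ℝ)*c)| ≤ 1 :=
      abs_le.mpr ⟨by linarith, by linarith⟩
    rw [Real.norm_eq_abs, hF, heq, abs_mul, abs_of_pos (inv_pos.mpr hK)]
    rw [div_eq_inv_mul]
    refine mul_le_mul_of_nonneg_left ?_ (le_of_lt (inv_pos.mpr hK))
    calc |((n:ℝ) - ((k:ℝ)*d - (k:ℝ)*c))*I + T|
        ≤ |((n:ℝ) - ((k:ℝ)*d - (k:ℝ)*c))*I| + |T| := abs_add_le _ _
      _ ≤ |I| + M := by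
          rw [abs_mul]
          have := abs_nonneg I
          nlinarith
  have h0 : Tendsto (fun k : ℕ => (|I| + M) / (k:ℝ)) atTop (nhds 0) :=
    tendsto_const_div_atTop_nhds_zero_nat _
  refine squeeze_zero' ?_ ?_ h0
  · filter_upwards with k using norm_nonneg _
  · filter_upwards [eventually_ge_atTop 1] with k hk using hbound k hk

/-- One-dimensional counterexample: if `a` and `b` are 1-periodic coefficients with values
in `[α, β]`, equal harmonic means, and `∫_0^1 |a − b| > 0`, then for `a_k(x) = a(kx)` and
`b_k(x) = b(kx)`: (i) `1/a_k − 1/b_k ⇀* 0`; (ii) the local averages of `|a_k − b_k|` over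
any interval converge to the (positive) mean `∫_0^1 |a − b|`. -/
theorem one_dim_counterexample
    (α β : ℝ) (hα : 0 < α) (hαβ : α ≤ β)
    (a b : ℝ → ℝ) (hameas : Measurable a) (hbmeas : Measurable b)
    (harange : ∀ y, a y ∈ Set.Icc α β) (hbrange : ∀ y, b y ∈ Set.Icc α β)
    (haper : ∀ y, a (y + 1) = a y) (hbper : ∀ y, b (y + 1) = b y)
    (hharm : ∫ y in (0:ℝ)..1, 1 / a y = ∫ y in (0:ℝ)..1, 1 / b y)
    (hdiff : 0 < ∫ y in (0:ℝ)..1, |a y - b y|) :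
    (∀ c d : ℝ, c < d →
      Tendsto (fun k : ℕ => ∫ x in c..d, (1 / a (k * x) - 1 / b (k * x))) atTop
        (nhds 0)) ∧
    (∀ x ρ : ℝ, 0 < ρ →
      Tendsto (fun k : ℕ =>
          (1 / (2 * ρ)) * ∫ y in (x - ρ)..(x + ρ), |a (k * y) - b (k * y)|) atTop
        (nhds (∫ y in (0:ℝ)..1, |a y - b y|))) := by
  have haI : ∀ y, α ≤ a y := fun y => (harange y).1
  have hbI : ∀ y, α ≤ b y := fun y => (hbrange y).1
  have hane : ∀ y, a y ≠ 0 := fun y => ne_of_gt (lt_of_lt_of_le hα (haI y))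
  have hbne : ∀ y, b y ≠ 0 := fun y => ne_of_gt (lt_of_lt_of_le hα (hbI y))
  constructor
  · intro c d hcd
    have hmeas : Measurable (fun y => 1 / a y - 1 / b y) :=
      (measurable_const.div hameas).sub (measurable_const.div hbmeas)
    have hbd : ∀ y, |1 / a y - 1 / b y| ≤ 2 / α := by
      intro y
      have h1 : 0 < a y := lt_of_lt_of_le hα (haI y)
      have h2 : 0 < b y := lt_of_lt_of_le hα (hbI y)
      have h3 : 1 / a y ≤ 1 / α := one_div_le_one_div_of_le hα (haI y)
      have h4 : 1 / b y ≤ 1 / α := one_div_le_one_div_of_le hα (hbI y)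
      have h5 : 0 < 1 / a y := by positivity
      have h6 : 0 < 1 / b y := by positivity
      have h7 : (2:ℝ)/α = (1/α) + (1/α) := by ring
      rw [abs_le]
      constructor <;> linarith
    have hper : Function.Periodic (fun y => 1 / a y - 1 / b y) 1 := by
      intro y; simp [haper y, hbper y]
    have hzero : (∫ y in (0:ℝ)..1, (1 / a y - 1 / b y)) = 0 := by
      have hia : IntervalIntegrable (fun y => 1 / a y) volume 0 1 := by
        refine (_root_.intervalIntegrable_const (μ := volume) (a := (0:ℝ)) (b := 1)
          (c := 1/α)).mono_fun ((measurable_const.div hameas)).aestronglyMeasurable.restrict ?_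
        filter_upwards with y
        have h1 : 0 < a y := lt_of_lt_of_le hα (haI y)
        have h3 : 1 / a y ≤ 1 / α := one_div_le_one_div_of_le hα (haI y)
        have h5 : (0:ℝ) < 1 / a y := by positivity
        simp only [Real.norm_eq_abs, abs_of_pos h5, abs_of_pos (by positivity : (0:ℝ) < 1/α)]
        exact h3
      have hib : IntervalIntegrable (fun y => 1 / b y) volume 0 1 := by
        refine (_root_.intervalIntegrable_const (μ := volume) (a := (0:ℝ)) (b := 1)
          (c := 1/α)).mono_fun ((measurable_const.div hbmeas)).aestronglyMeasurable.restrict ?_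
        filter_upwards with y
        have h1 : 0 < b y := lt_of_lt_of_le hα (hbI y)
        have h3 : 1 / b y ≤ 1 / α := one_div_le_one_div_of_le hα (hbI y)
        have h5 : (0:ℝ) < 1 / b y := by positivity
        simp only [Real.norm_eq_abs, abs_of_pos h5, abs_of_pos (by positivity : (0:ℝ) < 1/α)]
        exact h3
      rw [intervalIntegral.integral_sub hia hib, hharm, sub_self]
    have := periodic_avg_tendsto (fun y => 1 / a y - 1 / b y) hmeas (2/α) hbd hper c d
      (le_of_lt hcd)
    rw [hzero, mul_zero] at this
    exact this
  · intro x ρ hρ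
    have hmeas : Measurable (fun y => |a y - b y|) := (hameas.sub hbmeas).abs
    have hbd : ∀ y, |(|a y - b y|)| ≤ β - α := by
      intro y
      rw [abs_abs, abs_le]
      have := (harange y).2; have := (hbrange y).2
      constructor <;> linarith [haI y, hbI y]
    have hper : Function.Periodic (fun y => |a y - b y|) 1 := by
      intro y; simp [haper y, hbper y]
    have h := periodic_avg_tendsto (fun y => |a y - b y|) hmeas (β - α) hbd hper
      (x - ρ) (x + ρ) (by linarith)
    have h2 := h.const_mul (1 / (2 * ρ))
    have h3 : (1 / (2 * ρ)) * ((x + ρ - (x - ρ)) * ∫ y in (0:ℝ)..1, |a y - b y|)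
        = ∫ y in (0:ℝ)..1, |a y - b y| := by
      have : x + ρ - (x - ρ) = 2 * ρ := by ring
      rw [this]
      field_simp
    rw [h3] at h2
    exact h2
end
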